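/- Let n > 0 and let Φ_rv(t) be the position–velocity block of the Clohessy–Wiltshire state-transition matrix. Then for every t with 0 < nt < π, one has 8(1 − cos(nt)) − 3nt·sin(nt) > 0, hence det Φ_rv(t) = (sin(nt)/n³)·(8(1 − cos(nt)) − 3nt·sin(nt)) > 0 and Φ_rv(t) is invertible. -/

import Mathlib

open Real Matrix

/-! With `x = n t = 2u` one has `8 (1 - cos x) - 3 x sin x = 4 sin u (4 sin u - 3 u cos u)`, which is
positive because `u cos u < sin u` (i.e. `u < tan u`) for `0 < u < π / 2`. -/

/-- Position-velocity block of the Clohessy–Wiltshire state-transition matrix. -/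
noncomputable def phiRV (n t : ℝ) : Matrix (Fin 3) (Fin 3) ℝ :=
  (1 / n) • !![Real.sin (n * t), 2 * (1 - Real.cos (n * t)), 0;
               -2 * (1 - Real.cos (n * t)), 4 * Real.sin (n * t) - 3 * (n * t), 0;
               0, 0, Real.sin (n * t)]

theorem Real.mul_cos_lt_sin {x : ℝ} (h0 : 0 < x) (h1 : x < π / 2) : x * cos x < sin x := by
  have hcos : 0 < cos x := cos_pos_of_mem_Ioo ⟨by linarith [pi_pos], h1⟩
  have htan := lt_tan h0 h1
  rwa [tan_eq_sin_div_cos, lt_div_iff₀ hcos] at htan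

theorem Real.three_mul_mul_sin_lt_eight_mul_one_sub_cos {x : ℝ} (h0 : 0 < x) (h1 : x < π) :
    3 * x * sin x < 8 * (1 - cos x) := by
  obtain ⟨u, rfl⟩ : ∃ u, x = 2 * u := ⟨x / 2, by ring⟩
  have hsin : 0 < sin u := sin_pos_of_pos_of_lt_pi (by linarith) (by linarith)
  have hlt : u * cos u < sin u := mul_cos_lt_sin (by linarith) (by linarith)
  rw [sin_two_mul, cos_two_mul, cos_sq']
  nlinarith [mul_lt_mul_of_pos_left hlt hsin]

theorem det_phiRV (n t : ℝ) :
    (phiRV n t).det =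
      sin (n * t) / n ^ 3 * (8 * (1 - cos (n * t)) - 3 * (n * t) * sin (n * t)) := by
  rw [phiRV, det_smul, det_fin_three]
  simp only [of_apply, cons_val', cons_val_zero, cons_val_one, cons_val_two, empty_val',
    cons_val_fin_one, head_cons, head_fin_const, tail_cons, Fintype.card_fin]
  linear_combination (4 * sin (n * t) / n ^ 3) * sin_sq_add_cos_sq (n * t)

theorem phiRV_invertible_of_lt_pi (n : ℝ) (hn : 0 < n) (t : ℝ)
    (h0 : 0 < n * t) (hπ : n * t < Real.pi) :
    0 < 8 * (1 - Real.cos (n * t)) - 3 * (n * t) * Real.sin (n * t) ∧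
      (phiRV n t).det =
        (Real.sin (n * t) / n ^ 3) *
          (8 * (1 - Real.cos (n * t)) - 3 * (n * t) * Real.sin (n * t)) ∧
      0 < (phiRV n t).det ∧ IsUnit (phiRV n t) := by
  have hkey := sub_pos.2 (three_mul_mul_sin_lt_eight_mul_one_sub_cos h0 hπ)
  have hdet : 0 < (phiRV n t).det := by
    rw [det_phiRV]
    exact mul_pos (div_pos (sin_pos_of_pos_of_lt_pi h0 hπ) (by positivity)) hkey
  exact ⟨hkey, det_phiRV n t, hdet, (isUnit_iff_isUnit_det _).2 hdet.ne'.isUnit⟩
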